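/- arXiv:2011.02965 — 5 statements merged into one kernel-verified Lean document; each statement's English description precedes it below -/
import Mathlib

section
/- In a locally finite partially ordered set (causal set), if an event x has a non-empty rank 2 past (i.e., there exists y ≺ x whose minimal path to x has exactly 2 links), then there exists an event y in the rank 2 past of x such that the interval [y, x] is pure, meaning every element z with y ≺ z ≺ x satisfies both y ⋖ z and z ⋖ x (where ⋖ denotes the covering/link relation). -/
/-- `IsPath x y l`: the list `l` is a path from `x` to `y`, i.e. a chain of
consecutive links (covering relations) starting at `x` and ending at `y`. -/
def IsPath {C : Type*} [PartialOrder C] (x y : C) (l : List C) : Prop :=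
  l.Chain' (· ⋖ ·) ∧ l.head? = some x ∧ l.getLast? = some y

/-- `rank y x` is the minimal number of links over all paths from `y` to `x`. -/
noncomputable def rank {C : Type*} [PartialOrder C] (y x : C) : ℕ :=
  sInf {n | ∃ l : List C, IsPath y x l ∧ l.length = n + 1}

/-!
Rank 2 from `w` to `x` means exactly that `w ⋖ x` fails while `w ⋖ z ⋖ x` for some `z`.
Given `y` of rank 2, let `w` be maximal among the finitely many elements of `[y, x)` not
linked to `x`. By maximality every `z ∈ (w, x)` is linked to `x`; and `w ⋖ z`, since an
element strictly between `w` and `z` would be linked to `x` while lying below `z < x`.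
So `[w, x]` is pure, and it is not a link, whence `w` has rank 2.
-/

section Rank

variable {C : Type*} [PartialOrder C] {x y z : C}

theorem isPath_pair (h : y ⋖ x) : IsPath y x [y, x] :=
  ⟨List.isChain_pair.mpr h, rfl, rfl⟩

theorem isPath_triple (hyz : y ⋖ z) (hzx : z ⋖ x) : IsPath y x [y, z, x] :=
  ⟨.cons_cons hyz (List.isChain_pair.mpr hzx), rfl, rfl⟩

theorem rank_le_of_isPath {l : List C} {n : ℕ} (hl : IsPath y x l) (hlen : l.length = n + 1) :
    rank y x ≤ n :=
  Nat.sInf_le ⟨l, hl, hlen⟩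

theorem IsPath.three_le_length {l : List C} (hl : IsPath y x l) (hyx : y ≠ x)
    (hnc : ¬ y ⋖ x) : 3 ≤ l.length := by
  obtain ⟨hchain, hhead, hlast⟩ := hl
  replace hchain : l.IsChain (· ⋖ ·) := hchain
  rcases l with _ | ⟨a, _ | ⟨b, _ | ⟨c, t⟩⟩⟩ <;> simp_all

theorem not_covBy_of_rank_eq_two (h : rank y x = 2) : ¬ y ⋖ x := fun hyx => by
  have := rank_le_of_isPath (isPath_pair hyx) (n := 1) rfl
  omega

theorem rank_eq_two_of_covBy_covBy (hnc : ¬ y ⋖ x) (hyz : y ⋖ z) (hzx : z ⋖ x) :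
    rank y x = 2 := by
  refine le_antisymm (rank_le_of_isPath (isPath_triple hyz hzx) (n := 2) rfl) ?_
  refine le_csInf ⟨2, _, isPath_triple hyz hzx, rfl⟩ ?_
  rintro n ⟨l, hl, hlen⟩
  have := hl.three_le_length (hyz.lt.trans hzx.lt).ne hnc
  omega

end Rank

theorem exists_pure_interval_of_not_covBy {C : Type*} [PartialOrder C] [LocallyFiniteOrder C]
    {x y : C} (hyx : y < x) (hnc : ¬ y ⋖ x) :
    ∃ w, y ≤ w ∧ w < x ∧ ¬ w ⋖ x ∧ ∀ z, w < z → z < x → w ⋖ z ∧ z ⋖ x := by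
  have hfin : {w | w ∈ Set.Ico y x ∧ ¬ w ⋖ x}.Finite := (Set.finite_Ico y x).subset fun _ h => h.1
  obtain ⟨w, -, hmax⟩ := hfin.exists_le_maximal ⟨⟨le_rfl, hyx⟩, hnc⟩
  obtain ⟨⟨hyw, hwx⟩, hwnc⟩ := hmax.prop
  have hcov : ∀ z, w < z → z < x → z ⋖ x := fun z hwz hzx => by
    by_contra hznc
    exact (hmax.2 ⟨⟨hyw.trans hwz.le, hzx⟩, hznc⟩ hwz.le).not_gt hwz
  refine ⟨w, hyw, hwx, hwnc, fun z hwz hzx => ⟨⟨hwz, fun v hwv hvz => ?_⟩, hcov z hwz hzx⟩⟩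
  exact (hcov v hwv (hvz.trans hzx)).2 hvz hzx

theorem stmt0 {C : Type*} [PartialOrder C] [LocallyFiniteOrder C] (x : C)
    (h : ∃ y, y < x ∧ rank y x = 2) :
    ∃ y, y < x ∧ rank y x = 2 ∧ ∀ z, y < z → z < x → y ⋖ z ∧ z ⋖ x := by
  obtain ⟨y, hyx, hrank⟩ := h
  obtain ⟨w, -, hwx, hwnc, hpure⟩ :=
    exists_pure_interval_of_not_covBy hyx (not_covBy_of_rank_eq_two hrank)
  obtain ⟨z, hwz, hzx⟩ := (not_covBy_iff hwx).mp hwnc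
  obtain ⟨hwz, hzx⟩ := hpure z hwz hzx
  exact ⟨w, hwx, rank_eq_two_of_covBy_covBy hwnc hwz hzx, hpure⟩
end

section
/- Let C be a causal set, let P be a maximal-cardinality path (timelike geodesic) from a to b, and let x ⋖ z ⋖ y be three consecutive elements of P. Then rank(x, y) = 2 and the diamond [x, y] is pure: every element w with x ≺ w ≺ y satisfies x ⋖ w ⋖ y. -/
/-!
Splicing any path from `x` to `y` into `P` in place of `x ⋖ z ⋖ y` gives a path from `a` to `b`,
so by maximality of `P` every path from `x` to `y` has at most three elements. For `x < w < y`,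
local finiteness provides paths `x → w` and `w → y`; their concatenation is such a path, so each
of them is a single link. The rank is `2` because `x ⋖ z ⋖ y` rules out both `x = y` and `x ⋖ y`.
-/

section

variable {C : Type*} [PartialOrder C] {a b x y z w : C} {l l₁ l₂ : List C}

namespace IsPath

lemma ne_nil (h : IsPath x y l) : l ≠ [] := by
  rintro rfl
  simp [IsPath] at h

lemma eq_of_length_eq_one (h : IsPath x y l) (hl : l.length = 1) : x = y := by
  obtain ⟨u, rfl⟩ := List.length_eq_one_iff.mp hl
  obtain ⟨-, hx, hy⟩ := h
  simp_all

lemma covBy_of_length_eq_two (h : IsPath x y l) (hl : l.length = 2) : x ⋖ y := by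
  obtain ⟨u, v, rfl⟩ := List.length_eq_two.mp hl
  obtain ⟨hc, hx, hy⟩ := h
  simp only [List.head?_cons, List.getLast?_cons_cons, List.getLast?_singleton,
    Option.some.injEq] at hx hy
  subst hx hy
  exact List.isChain_pair.mp hc

lemma two_le_length (h : IsPath x y l) (hxy : x ≠ y) : 2 ≤ l.length := by
  have := List.length_pos_iff.mpr h.ne_nil
  by_contra! hl
  exact hxy (h.eq_of_length_eq_one (by omega))

lemma covBy_of_getElem? {i : ℕ} (h : IsPath a b l) (hx : l[i]? = some x)
    (hy : l[i + 1]? = some y) : x ⋖ y := by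
  obtain ⟨-, rfl⟩ := List.getElem?_eq_some_iff.mp hx
  obtain ⟨hi', rfl⟩ := List.getElem?_eq_some_iff.mp hy
  exact List.isChain_iff_getElem.mp h.1 i hi'

lemma take_of_getElem? {k : ℕ} (h : IsPath a b l) (hw : l[k]? = some w) :
    IsPath a w (l.take (k + 1)) := by
  refine ⟨h.1.take _, ?_, ?_⟩
  · simpa [List.head?_take] using h.2.1
  · simp [List.getLast?_take, hw]

lemma drop_of_getElem? {k : ℕ} (h : IsPath a b l) (hw : l[k]? = some w) :
    IsPath w b (l.drop k) := by
  have hk : k < l.length := (List.getElem?_eq_some_iff.mp hw).1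
  refine ⟨h.1.drop _, ?_, ?_⟩
  · rwa [List.head?_drop]
  · simpa [List.getLast?_drop, hk.not_ge] using h.2.2

lemma append (h₁ : IsPath x w l₁) (h₂ : IsPath w y l₂) :
    IsPath x y (l₁ ++ l₂.tail) := by
  obtain ⟨c₁, hx, hw⟩ := h₁
  obtain ⟨t, rfl⟩ : ∃ t, l₂ = w :: t := List.head?_eq_some_iff.mp h₂.2.1
  obtain ⟨c₂, -, hy⟩ := h₂
  refine ⟨c₁.append c₂.tail ?_, by simp [List.head?_append, hx], ?_⟩
  · intro u hu v hv
    rw [hw, Option.mem_some_iff] at hu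
    subst hu
    exact c₂.rel_head? hv
  · rcases t with _ | ⟨v, t⟩
    · simpa [hw] using hy
    · simpa [List.getLast?_append] using hy

end IsPath

lemma exists_isPath_of_le [LocallyFiniteOrder C] (hxy : x ≤ y) : ∃ l, IsPath x y l := by
  obtain ⟨l, hl, hc, hx, hy⟩ :=
    List.exists_isChain_ne_nil_of_relationReflTransGen (le_iff_reflTransGen_covBy.mp hxy)
  exact ⟨l, hc, by rw [List.head?_eq_some_head hl, hx],
    by rw [List.getLast?_eq_some_getLast hl, hy]⟩

lemma rank_eq_two_of_covBy_of_covBy (hxz : x ⋖ z) (hzy : z ⋖ y) : rank x y = 2 := by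
  refine IsLeast.csInf_eq ⟨⟨[x, z, y], ⟨?_, rfl, rfl⟩, rfl⟩, ?_⟩
  · exact List.isChain_cons_cons.mpr ⟨hxz, List.isChain_pair.mpr hzy⟩
  · rintro n ⟨l, hl, hn⟩
    have := hl.two_le_length (hxz.lt.trans hzy.lt).ne
    by_contra! h
    exact (hl.covBy_of_length_eq_two (by omega)).2 hxz.lt hzy.lt

lemma covBy_and_covBy_of_forall_isPath_length_le_three [LocallyFiniteOrder C]
    (hbound : ∀ l, IsPath x y l → l.length ≤ 3) (hxw : x < w) (hwy : w < y) :
    x ⋖ w ∧ w ⋖ y := by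
  obtain ⟨l₁, h₁⟩ := exists_isPath_of_le hxw.le
  obtain ⟨l₂, h₂⟩ := exists_isPath_of_le hwy.le
  have hlen := hbound _ (h₁.append h₂)
  have := h₁.two_le_length hxw.ne
  have := h₂.two_le_length hwy.ne
  simp only [List.length_append, List.length_tail] at hlen
  exact ⟨h₁.covBy_of_length_eq_two (by omega), h₂.covBy_of_length_eq_two (by omega)⟩

def IsGeodesic (a b : C) (P : List C) : Prop :=
  IsPath a b P ∧ ∀ l, IsPath a b l → l.length ≤ P.length

lemma IsGeodesic.length_add_le {P : List C} {i j : ℕ} (hP : IsGeodesic a b P)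
    (hx : P[i]? = some x) (hy : P[j]? = some y) (hl : IsPath x y l) :
    l.length + i ≤ j + 1 := by
  have hi : i < P.length := (List.getElem?_eq_some_iff.mp hx).1
  have hj : j < P.length := (List.getElem?_eq_some_iff.mp hy).1
  have hlen := hP.2 _ (((hP.1.take_of_getElem? hx).append hl).append (hP.1.drop_of_getElem? hy))
  simp only [List.length_append, List.length_tail, List.length_take, List.length_drop] at hlen
  have := List.length_pos_iff.mpr hl.ne_nil
  omega

end

theorem stmt2 {C : Type*} [PartialOrder C] [LocallyFiniteOrder C] (a b : C)
    (P : List C) (hP : IsPath a b P)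
    (hmax : ∀ l : List C, IsPath a b l → l.length ≤ P.length)
    (x z y : C) (i : ℕ)
    (hx : P[i]? = some x) (hz : P[i + 1]? = some z)
    (hy : P[i + 2]? = some y) :
    rank x y = 2 ∧ ∀ w, x < w → w < y → x ⋖ w ∧ w ⋖ y := by
  have hgeo : IsGeodesic a b P := ⟨hP, hmax⟩
  have hxz := hP.covBy_of_getElem? hx hz
  have hzy := hP.covBy_of_getElem? hz hy
  refine ⟨rank_eq_two_of_covBy_of_covBy hxz hzy, fun w ↦ ?_⟩
  refine covBy_and_covBy_of_forall_isPath_length_le_three fun l hl ↦ ?_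
  have := hgeo.length_add_le hx hy hl
  omega
end

section
/- Let n points be chosen i.i.d. uniformly from the unit square with the coordinatewise partial order. The expected number of minimal elements of the resulting random poset equals the n-th harmonic number h_n = Σ_{k=1}^{n} 1/k. -/
/-!
The number of minimal points is the sum over `i` of the indicator that point `i` is minimal,
so its expectation is `n` times the probability that a given point is minimal. Conditioning on
that point `x`, the other `n - 1` independent points must avoid the box `[0, x₁) × [0, x₂)`,
which has area `x₁ x₂`; hence the expectation is `n ∫∫ (1 - uv)^(n-1) du dv`. Integrating in `v`
gives `n ∫₀¹ (1 - uv)^(n-1) dv = (1 - (1-u)^n) / u = ∑_{k<n} (1-u)^k`, and integrating this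
in `u` gives `∑_{k<n} 1/(k+1)`.
-/

open MeasureTheory

/-- The distribution of `n` i.i.d. points uniform on the unit square `[0,1]²`,
with the coordinatewise (2D / causal) order on `ℝ × ℝ`. -/
noncomputable def unitSquareIID (n : ℕ) : Measure (Fin n → ℝ × ℝ) :=
  Measure.pi fun _ =>
    (volume : Measure (ℝ × ℝ)).restrict (Set.Icc 0 1 ×ˢ Set.Icc 0 1)

open Set

theorem integral_ncard_setOf_mem_eq_sum {Ω ι : Type*} [MeasurableSpace Ω] [Fintype ι]
    (μ : Measure Ω) [IsFiniteMeasure μ] {A : ι → Set Ω} (hA : ∀ i, MeasurableSet (A i)) :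
    ∫ ω, ({i | ω ∈ A i}.ncard : ℝ) ∂μ = ∑ i, μ.real (A i) := by
  classical
  have hcount : ∀ ω, ({i | ω ∈ A i}.ncard : ℝ) = ∑ i, (A i).indicator 1 ω := by
    intro ω
    rw [ncard_eq_toFinset_card', toFinset_ofPred, Finset.card_filter]
    push_cast
    simp only [indicator_apply, Pi.one_apply]
  simp_rw [hcount]
  rw [integral_finsetSum _ fun i _ => (integrable_indicator_iff (hA i)).2 (integrableOn_const)]
  simp_rw [integral_indicator_one (hA _)]

section MinimalPoints

variable {α : Type*} [MeasurableSpace α] [Preorder α]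

theorem measurableSet_setOf_forall_not_lt {ι : Type*} [Countable ι]
    (hlt : MeasurableSet {p : α × α | p.1 < p.2}) (i : ι) :
    MeasurableSet {ω : ι → α | ∀ j, ¬ ω j < ω i} := by
  simp only [ofPred_forall]
  exact .iInter fun j =>
    hlt.compl.preimage (f := fun ω : ι → α => (ω j, ω i)) (by fun_prop)

theorem measure_pi_setOf_forall_not_lt (μ : Measure α) [SigmaFinite μ]
    (hlt : MeasurableSet {p : α × α | p.1 < p.2}) {m : ℕ} (i : Fin (m + 1)) :
    Measure.pi (fun _ => μ) {ω | ∀ j, ¬ ω j < ω i} = ∫⁻ x, μ {y | ¬ y < x} ^ m ∂μ := by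
  set B : Set (α × (Fin m → α)) := {p | ∀ j, ¬ p.2 j < p.1}
  have hB : MeasurableSet B := by
    simp only [B, ofPred_forall]
    exact .iInter fun j =>
      hlt.compl.preimage (f := fun p : α × (Fin m → α) => (p.2 j, p.1)) (by fun_prop)
  have hpre : {ω : Fin (m + 1) → α | ∀ j, ¬ ω j < ω i} =
      MeasurableEquiv.piFinSuccAbove (fun _ => α) i ⁻¹' B := by
    ext ω
    simp [B, Fin.forall_iff_succAbove i (P := fun j => ¬ ω j < ω i), Fin.removeNth]
  rw [hpre, (measurePreserving_piFinSuccAbove (fun _ => μ) i).measure_preimage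
    hB.nullMeasurableSet, Measure.prod_apply hB]
  congr 1 with x
  have hslice : Prod.mk x ⁻¹' B = univ.pi fun _ : Fin m => {y | ¬ y < x} := by
    ext ω; simp [B]
  rw [hslice, Measure.pi_pi, Finset.prod_const, Finset.card_univ, Fintype.card_fin]

end MinimalPoints

noncomputable def uniformUnitSquare : Measure (ℝ × ℝ) :=
  volume.restrict (Icc 0 1 ×ˢ Icc 0 1)

theorem volume_Icc_zero_prod_Icc_zero {a b : ℝ} (ha : 0 ≤ a) :
    volume (Icc 0 a ×ˢ Icc 0 b) = ENNReal.ofReal (a * b) := by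
  rw [Measure.volume_eq_prod, Measure.prod_prod, Real.volume_Icc, Real.volume_Icc,
    sub_zero, sub_zero, ENNReal.ofReal_mul ha]

instance : NullSingletonClass uniformUnitSquare :=
  inferInstanceAs (NullSingletonClass (volume.restrict _))

instance : IsProbabilityMeasure uniformUnitSquare := by
  constructor
  rw [uniformUnitSquare, Measure.restrict_apply_univ,
    volume_Icc_zero_prod_Icc_zero zero_le_one, mul_one, ENNReal.ofReal_one]

theorem measurableSet_setOf_fst_lt_snd :
    MeasurableSet {p : (ℝ × ℝ) × (ℝ × ℝ) | p.1 < p.2} := by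
  simp only [lt_iff_le_not_ge]
  exact measurableSet_le'.inter (measurableSet_le measurable_snd measurable_fst).compl

theorem uniformUnitSquare_setOf_not_lt {x : ℝ × ℝ} (hx : x ∈ Icc 0 1 ×ˢ Icc 0 1) :
    uniformUnitSquare {y | ¬ y < x} = ENNReal.ofReal (1 - x.1 * x.2) := by
  obtain ⟨⟨hx₁, hx₁'⟩, hx₂, hx₂'⟩ := hx
  have hIic : Iic x ∩ Icc 0 1 ×ˢ Icc 0 1 = Icc 0 x.1 ×ˢ Icc 0 x.2 := by
    ext y
    simp only [mem_inter_iff, mem_Iic, mem_prod, mem_Icc, Prod.le_def]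
    constructor
    · rintro ⟨⟨h₁, h₂⟩, ⟨h₃, -⟩, h₄, -⟩
      exact ⟨⟨h₃, h₁⟩, h₄, h₂⟩
    · rintro ⟨⟨h₃, h₁⟩, h₄, h₂⟩
      exact ⟨⟨h₁, h₂⟩, ⟨h₃, h₁.trans hx₁'⟩, h₄, h₂.trans hx₂'⟩
  have hIio : uniformUnitSquare (Iio x) = ENNReal.ofReal (x.1 * x.2) := by
    rw [measure_congr Iio_ae_eq_Iic, uniformUnitSquare, Measure.restrict_apply measurableSet_Iic,
      hIic, volume_Icc_zero_prod_Icc_zero hx₁]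
  have hIio_meas : MeasurableSet (Iio x) :=
    Iic_sdiff_right (a := x) ▸ measurableSet_Iic.diff (measurableSet_singleton x)
  change uniformUnitSquare (Iio x)ᶜ = _
  rw [prob_compl_eq_one_sub hIio_meas, hIio, ENNReal.ofReal_sub _ (by positivity),
    ENNReal.ofReal_one]

theorem mul_intervalIntegral_one_sub_mul_pow (u : ℝ) (m : ℕ) :
    u * ((m + 1) * ∫ v in (0 : ℝ)..1, (1 - u * v) ^ m) = 1 - (1 - u) ^ (m + 1) := by
  have h := intervalIntegral.smul_integral_comp_mul_left (a := 0) (b := 1)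
    (fun t => (1 - t) ^ m) u
  rw [smul_eq_mul, mul_zero, mul_one, intervalIntegral.integral_comp_sub_left (fun t => t ^ m),
    sub_zero, integral_pow, one_pow] at h
  rw [mul_left_comm, h]
  field_simp

theorem mul_intervalIntegral_one_sub_mul_pow_eq_geom_sum (u : ℝ) (m : ℕ) :
    (m + 1) * ∫ v in (0 : ℝ)..1, (1 - u * v) ^ m = ∑ k ∈ Finset.range (m + 1), (1 - u) ^ k := by
  rcases eq_or_ne u 0 with rfl | hu
  · simp
  refine mul_left_cancel₀ hu ?_
  rw [mul_intervalIntegral_one_sub_mul_pow]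
  linear_combination geom_sum_mul (1 - u) (m + 1)

theorem integral_uniformUnitSquare_one_sub_mul_pow (m : ℕ) :
    (m + 1) * ∫ x, (1 - x.1 * x.2) ^ m ∂uniformUnitSquare =
      ∑ k ∈ Finset.range (m + 1), (1 : ℝ) / (k + 1) := by
  have hIcc : ∀ f : ℝ → ℝ, ∫ t in Icc 0 1, f t = ∫ t in (0 : ℝ)..1, f t := fun f => by
    rw [integral_Icc_eq_integral_Ioc, intervalIntegral.integral_of_le zero_le_one]
  have hint : IntegrableOn (fun x : ℝ × ℝ => (1 - x.1 * x.2) ^ m) (Icc 0 1 ×ˢ Icc 0 1)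
      (volume.prod volume) :=
    (Continuous.continuousOn (by fun_prop)).integrableOn_compact (isCompact_Icc.prod isCompact_Icc)
  rw [uniformUnitSquare, Measure.volume_eq_prod, setIntegral_prod _ hint, hIcc,
    ← intervalIntegral.integral_const_mul]
  simp_rw [hIcc, mul_intervalIntegral_one_sub_mul_pow_eq_geom_sum]
  rw [intervalIntegral.integral_finsetSum fun k _ =>
    (by fun_prop : Continuous _).intervalIntegrable _ _]
  refine Finset.sum_congr rfl fun k _ => ?_
  simp [intervalIntegral.integral_comp_sub_left (fun t => t ^ k)]

theorem unitSquareIID_eq_pi (n : ℕ) : unitSquareIID n = Measure.pi fun _ => uniformUnitSquare :=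
  rfl

instance (n : ℕ) : IsProbabilityMeasure (unitSquareIID n) := by
  rw [unitSquareIID_eq_pi]
  infer_instance

theorem unitSquareIID_real_setOf_forall_not_lt {m : ℕ} (i : Fin (m + 1)) :
    (unitSquareIID (m + 1)).real {ω | ∀ j, ¬ ω j < ω i} =
      ∫ x, (1 - x.1 * x.2) ^ m ∂uniformUnitSquare := by
  have hsq : ∀ᵐ x ∂uniformUnitSquare, x ∈ Icc 0 1 ×ˢ Icc 0 1 :=
    ae_restrict_mem (measurableSet_Icc.prod measurableSet_Icc)
  have hnonneg : ∀ x ∈ Icc (0 : ℝ) 1 ×ˢ Icc 0 1, 0 ≤ 1 - x.1 * x.2 := by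
    rintro x ⟨⟨hx₁, hx₁'⟩, hx₂, hx₂'⟩
    nlinarith
  have hcongr : (fun x => uniformUnitSquare {y | ¬ y < x} ^ m)
      =ᵐ[uniformUnitSquare] fun x => ENNReal.ofReal ((1 - x.1 * x.2) ^ m) := by
    filter_upwards [hsq] with x hx
    rw [uniformUnitSquare_setOf_not_lt hx, ENNReal.ofReal_pow (hnonneg x hx)]
  rw [measureReal_def, unitSquareIID_eq_pi,
    measure_pi_setOf_forall_not_lt uniformUnitSquare measurableSet_setOf_fst_lt_snd,
    lintegral_congr_ae hcongr, integral_eq_lintegral_of_nonneg_ae _ (by fun_prop)]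
  filter_upwards [hsq] with x hx
  exact pow_nonneg (hnonneg x hx) _

theorem stmt9_general (n : ℕ) :
    ∫ ω, (({i : Fin n | ∀ j : Fin n, ¬ω j < ω i}.ncard : ℝ)) ∂(unitSquareIID n)
      = ∑ k ∈ Finset.range n, (1 : ℝ) / (k + 1) := by
  cases n with
  | zero => simp
  | succ m =>
    refine (integral_ncard_setOf_mem_eq_sum _
      (measurableSet_setOf_forall_not_lt measurableSet_setOf_fst_lt_snd)).trans ?_
    simp_rw [unitSquareIID_real_setOf_forall_not_lt]
    rw [Finset.sum_const, Finset.card_univ, Fintype.card_fin, nsmul_eq_mul, Nat.cast_succ,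
      integral_uniformUnitSquare_one_sub_mul_pow]

theorem stmt9 (n : ℕ) (hn : 1 ≤ n) :
    ∫ ω, (({i : Fin n | ∀ j : Fin n, ¬ω j < ω i}.ncard : ℝ)) ∂(unitSquareIID n)
      = ∑ k ∈ Finset.range n, (1 : ℝ) / (k + 1) :=
  stmt9_general n
end

section
/- For all real (or complex) z, e^{−z} · Σ_{n=1}^{∞} h_n z^n / n! = Ein(z), where h_n is the n-th harmonic number and Ein(z) = Σ_{n=1}^{∞} (−1)^{n−1} z^n / (n · n!) is the entire exponential integral. Equivalently, Σ_{n=1}^{∞} h_n z^n / n! = e^z · Ein(z). -/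
/-- The `n`-th harmonic number as a real number. -/
noncomputable def h (n : ℕ) : ℝ := ∑ k ∈ Finset.range n, (1 : ℝ) / (k + 1)

/-- The entire exponential integral `Ein(z) = ∑_{n≥1} (-1)^{n-1} zⁿ/(n·n!)`. -/
noncomputable def Ein (z : ℝ) : ℝ :=
  ∑' n : ℕ, (-1) ^ n * z ^ (n + 1) / ((n + 1) * (n + 1).factorial)

/-- Coefficient sequence of `Ein` at `z`. -/
noncomputable def a (z : ℝ) : ℕ → ℝ
  | 0 => 0
  | k + 1 => (-1) ^ k * z ^ (k + 1) / ((k + 1) * (k + 1).factorial)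

lemma a_norm_le (z : ℝ) (n : ℕ) : ‖a z n‖ ≤ |z| ^ n / n.factorial := by
  cases n with
  | zero => simp [a]
  | succ k =>
    have hfac : (0:ℝ) < ((k+1).factorial : ℝ) := by positivity
    have hk0 : (0:ℝ) ≤ (k:ℝ) := Nat.cast_nonneg k
    have habs : ‖a z (k+1)‖ = |z| ^ (k+1) / (((k:ℝ)+1) * ((k+1).factorial : ℝ)) := by
      show |(-1 : ℝ) ^ k * z ^ (k+1) / (((k:ℕ)+1 : ℝ) * ((k+1).factorial : ℝ))| = _
      rw [abs_div, abs_mul, abs_pow, abs_pow, abs_neg, abs_one, one_pow, one_mul, abs_mul]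
      rw [abs_of_pos (by positivity : (0:ℝ) < (k:ℝ)+1),
        abs_of_pos (by positivity : (0:ℝ) < ((k+1).factorial : ℝ))]
    rw [habs]
    gcongr
    nlinarith [hfac, hk0]

lemma summable_a_norm (z : ℝ) : Summable fun n => ‖a z n‖ :=
  Summable.of_nonneg_of_le (fun _ => norm_nonneg _) (a_norm_le z)
    (Real.summable_pow_div_factorial |z|)

lemma summable_exp_norm (z : ℝ) : Summable fun n : ℕ => ‖z ^ n / n.factorial‖ := by
  have := Real.summable_pow_div_factorial |z|
  refine this.congr fun n => ?_
  rw [norm_div, Real.norm_eq_abs, Real.norm_eq_abs, abs_pow, Nat.abs_cast]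

lemma Ein_eq_tsum_a (z : ℝ) : Ein z = ∑' n, a z n := by
  rw [Summable.tsum_eq_zero_add (summable_a_norm z).of_norm]
  simp only [a, zero_add]
  rfl

lemma alt1 (n : ℕ) :
    ∑ k ∈ Finset.range (n + 1), ((-1 : ℝ) ^ k * (n.choose k) / (k + 1)) = 1 / (n + 1) := by
  have key : ∀ k, ((-1 : ℝ) ^ k * (n.choose k) / (k + 1))
      = (-1 : ℝ) ^ k * ((n+1).choose (k+1)) / (n + 1) := by
    intro k
    have hc : (n + 1) * n.choose k = (n+1).choose (k+1) * (k+1) := Nat.add_one_mul_choose_eq n k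
    have hc' : ((n:ℝ) + 1) * n.choose k = ((n+1).choose (k+1) : ℝ) * (k+1) := by
      exact_mod_cast hc
    have key2 : (n.choose k : ℝ) / ((k:ℝ)+1) = (((n+1).choose (k+1)) : ℝ) / ((n:ℝ)+1) := by
      rw [div_eq_div_iff (by positivity) (by positivity)]
      linear_combination hc'
    rw [mul_div_assoc, mul_div_assoc, key2]
  simp_rw [key]
  rw [← Finset.sum_div]
  congr 1
  have h0 : ∑ j ∈ Finset.range (n + 2), ((-1 : ℝ) ^ j * ((n+1).choose j)) = 0 := by
    have := Int.alternating_sum_range_choose_of_ne (Nat.succ_ne_zero n)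
    exact_mod_cast congrArg (fun x : ℤ => (x : ℝ)) this
  rw [Finset.sum_range_succ'] at h0
  simp only [pow_succ, pow_zero, Nat.choose_zero_right, Nat.cast_one, one_mul, mul_one] at h0
  have : ∑ k ∈ Finset.range (n+1), ((-1:ℝ)^k * (-1) * ((n+1).choose (k+1)))
      = -∑ k ∈ Finset.range (n+1), ((-1:ℝ)^k * ((n+1).choose (k+1))) := by
    rw [← Finset.sum_neg_distrib]
    congr 1; ext k; ring
  rw [this] at h0
  linarith

lemma alt2 (n : ℕ) :
    ∑ k ∈ Finset.range n, ((-1 : ℝ) ^ k * (n.choose (k+1)) / (k + 1)) = h n := by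
  induction n with
  | zero => simp [h]
  | succ n ih =>
    have split : ∀ k, ((-1 : ℝ) ^ k * ((n+1).choose (k+1)) / (k + 1))
        = (-1 : ℝ) ^ k * (n.choose k) / (k + 1) + (-1 : ℝ) ^ k * (n.choose (k+1)) / (k + 1) := by
      intro k
      have : ((n+1).choose (k+1) : ℝ) = (n.choose k : ℝ) + (n.choose (k+1) : ℝ) := by
        exact_mod_cast Nat.choose_succ_succ n k
      rw [this]; ring
    simp_rw [split]
    rw [Finset.sum_add_distrib, alt1, Finset.sum_range_succ, Nat.choose_succ_self]
    simp only [Nat.cast_zero, mul_zero, zero_div, add_zero]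
    rw [ih]
    simp [h, Finset.sum_range_succ]
    ring

lemma coeff (z : ℝ) (n : ℕ) :
    ∑ k ∈ Finset.range (n + 1), (z ^ k / k.factorial) * a z (n - k)
      = h n * z ^ n / n.factorial := by
  have reflect : ∑ k ∈ Finset.range (n + 1), (z ^ k / k.factorial) * a z (n - k)
      = ∑ k ∈ Finset.range (n + 1), (z ^ (n - k) / (n - k).factorial) * a z k := by
    rw [← Finset.sum_range_reflect (fun k => (z ^ (n - k) / (n - k).factorial) * a z k) (n+1)]
    apply Finset.sum_congr rfl
    intro k hk
    have hk' : k ≤ n := Nat.lt_succ_iff.mp (Finset.mem_range.mp hk)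
    have : n + 1 - 1 - k = n - k := by omega
    rw [this, Nat.sub_sub_self hk']
  rw [reflect, Finset.sum_range_succ']
  have ha0 : (z ^ (n - 0) / (n - 0).factorial) * a z 0 = 0 := by simp [a]
  rw [ha0, add_zero, ← alt2 n, Finset.sum_mul, Finset.sum_div]
  apply Finset.sum_congr rfl
  intro k hk
  have hk' : k + 1 ≤ n := Nat.lt_iff_add_one_le.mp (Finset.mem_range.mp hk)
  show (z ^ (n - (k+1)) / (n - (k+1)).factorial) * a z (k+1) = _
  simp only [a]
  have hz : z ^ (n - (k+1)) * z ^ (k+1) = z ^ n := by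
    rw [← pow_add, Nat.sub_add_cancel hk']
  have hc : (n.choose (k+1) : ℝ) * (k+1).factorial * (n - (k+1)).factorial = n.factorial := by
    exact_mod_cast Nat.choose_mul_factorial_mul_factorial hk'
  have hf1 : ((n - (k+1)).factorial : ℝ) ≠ 0 := Nat.cast_ne_zero.mpr (Nat.factorial_ne_zero _)
  have hf2 : ((k+1).factorial : ℝ) ≠ 0 := Nat.cast_ne_zero.mpr (Nat.factorial_ne_zero _)
  have hf3 : ((n).factorial : ℝ) ≠ 0 := Nat.cast_ne_zero.mpr (Nat.factorial_ne_zero _)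
  have hk1 : ((k:ℝ) + 1) ≠ 0 := by positivity
  field_simp
  push_cast at hc ⊢
  linear_combination ((n.factorial : ℝ)) * hz
    - (z ^ n) * hc

lemma main_eq (z : ℝ) : ∑' n : ℕ, h n * z ^ n / n.factorial = Real.exp z * Ein z := by
  have expEq : Real.exp z = ∑' n : ℕ, z ^ n / n.factorial := by
    rw [Real.exp_eq_exp_ℝ, NormedSpace.exp_eq_tsum_div]
  rw [expEq, Ein_eq_tsum_a,
    tsum_mul_tsum_eq_tsum_sum_range_of_summable_norm (summable_exp_norm z) (summable_a_norm z)]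
  exact tsum_congr fun n => (coeff z n).symm

theorem stmt11 (z : ℝ) :
    Real.exp (-z) * ∑' n : ℕ, h n * z ^ n / n.factorial = Ein z ∧
    ∑' n : ℕ, h n * z ^ n / n.factorial = Real.exp z * Ein z := by
  refine ⟨?_, main_eq z⟩
  rw [main_eq z, Real.exp_neg, ← mul_assoc, inv_mul_cancel₀ (Real.exp_ne_zero z), one_mul]
end

section
/- Let λ > 0 and let N be a Poisson random variable with mean λ. Then e^{−λ} · Σ_{n=1}^{∞} (λ^{n}/n!) · h_n = Ein(λ) = ln λ + γ + Γ(0, λ), where h_n is the n-th harmonic number, γ is the Euler–Mascheroni constant, and Γ(0,λ) = ∫_λ^∞ e^{−t}/t dt is the incomplete Gamma function. In particular E[h_N] = ln λ + γ + Γ(0,λ). -/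
section Comb
open Finset


lemma L1 (M : ℕ) : ∀ k, ∑ n ∈ range (k+1), (-1:ℝ)^n * ((M+1).choose n) = (-1)^k * (M.choose k) := by
  intro k
  induction k with
  | zero => simp
  | succ k ih =>
    rw [sum_range_succ, ih, Nat.choose_succ_succ (M) (k)]
    push_cast
    ring

lemma Lalt (M : ℕ) : ∑ n ∈ range (M+1), (-1:ℝ)^n * (M.choose n) = if M = 0 then 1 else 0 := by
  have := Int.alternating_sum_range_choose (n := M)
  have := congrArg (fun z : ℤ => (z : ℝ)) this
  push_cast at this
  simpa using this

lemma L2 (M : ℕ) : ∑ m ∈ range (M+1), (-1:ℝ)^m * (M.choose m) / (m+1) = 1/(M+1) := by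
  have key : ∀ m, (-1:ℝ)^m * (M.choose m) / (m+1) = -((-1)^(m+1) * ((M+1).choose (m+1))) / (M+1) := by
    intro m
    have h1 : (M + 1) * (M.choose m) = ((M+1).choose (m+1)) * (m+1) := by
      simpa using Nat.add_one_mul_choose_eq M m
    have h1' : ((M:ℝ) + 1) * (M.choose m) = ((M+1).choose (m+1)) * (m+1) := by
      exact_mod_cast congrArg (fun z : ℕ => (z : ℝ)) h1
    have h2 : ((M.choose m:ℝ))/(m+1) = (((M+1).choose (m+1)):ℝ)/(M+1) := by
      rw [div_eq_div_iff (by positivity) (by positivity)]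
      linear_combination h1'
    calc (-1:ℝ)^m * (M.choose m) / (m+1) = (-1)^m * ((M.choose m:ℝ)/(m+1)) := by ring
    _ = (-1)^m * ((((M+1).choose (m+1)):ℝ)/(M+1)) := by rw [h2]
    _ = -((-1)^(m+1) * ((M+1).choose (m+1))) / (M+1) := by rw [pow_succ]; ring
  rw [sum_congr rfl (fun m _ => key m)]
  rw [← sum_div]
  rw [sum_neg_distrib]
  have shift : ∑ m ∈ range (M+1), ((-1:ℝ)^(m+1) * ((M+1).choose (m+1))) 
      = (∑ n ∈ range (M+2), (-1:ℝ)^n * ((M+1).choose n)) - 1 := by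
    rw [Finset.sum_range_succ' (fun n => (-1:ℝ)^n * ((M+1).choose n)) (M+1)]
    simp
  rw [shift, Lalt (M+1)]
  simp

lemma L3 (M : ℕ) : ∑ n ∈ range (M+2), (-1:ℝ)^n * ((M+1).choose n) * h n = -1/(M+1) := by
  have swap : ∑ n ∈ range (M+2), (-1:ℝ)^n * ((M+1).choose n) * h n
      = ∑ k ∈ range (M+2), (1:ℝ)/(k+1) * ∑ n ∈ Finset.Ico (k+1) (M+2), (-1:ℝ)^n * ((M+1).choose n) := by
    simp_rw [h, mul_sum]
    have := Finset.sum_Ico_Ico_comm' 0 (M+2) (fun k n => (1:ℝ)/(k+1) * ((-1:ℝ)^n * ((M+1).choose n)))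
    simp only [Finset.range_eq_Ico]
    have e1 : ∑ x ∈ Finset.Ico 0 (M+2), ∑ y ∈ Finset.Ico 0 x, (-1:ℝ)^x * ((M+1).choose x) * (1/(y+1))
        = ∑ x ∈ Finset.Ico 0 (M+2), ∑ y ∈ Finset.Ico 0 x, 1/(y+1) * ((-1:ℝ)^x * ((M+1).choose x)) :=
      sum_congr rfl (fun x _ => sum_congr rfl (fun y _ => by ring))
    rw [show (∑ x ∈ Finset.Ico 0 (M+2), ∑ x_1 ∈ Finset.Ico 0 x, (-1:ℝ)^x * ((M+1).choose x) * (1/(x_1+1)))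
        = ∑ i ∈ Finset.Ico 0 (M+2), ∑ j ∈ Finset.Ico (i+1) (M+2), 1/(i+1) * ((-1:ℝ)^j * ((M+1).choose j)) from by rw [e1, ← this]]
  rw [swap]
  have inner : ∀ k ∈ range (M+2), (1:ℝ)/(k+1) * ∑ n ∈ Finset.Ico (k+1) (M+2), (-1:ℝ)^n * ((M+1).choose n)
      = -((-1:ℝ)^k * (M.choose k) / (k+1)) := by
    intro k hk
    have hle : k + 1 ≤ M + 2 := by simpa [Nat.lt_succ_iff] using (mem_range.mp hk)
    rw [Finset.sum_Ico_eq_sub _ hle, Lalt (M+1), L1 M k]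
    simp only [Nat.succ_ne_zero, if_false]
    ring
  rw [sum_congr rfl inner]
  rw [Finset.sum_range_succ]
  simp only [Nat.choose_succ_self, Nat.cast_zero, mul_zero, zero_div, neg_zero, add_zero]
  rw [Finset.sum_neg_distrib, L2 M]
  ring

lemma h_nonneg (n : ℕ) : 0 ≤ h n := Finset.sum_nonneg fun k _ => by positivity

lemma h_le (n : ℕ) : h n ≤ n := by
  calc h n ≤ ∑ k ∈ range n, (1:ℝ) := Finset.sum_le_sum fun k _ => by
        rw [div_le_one (by positivity)]; linarith [Nat.cast_nonneg (α := ℝ) k]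
  _ = n := by simp

lemma summable_b_norm (lam : ℝ) (hlam : 0 < lam) :
    Summable fun n : ℕ => ‖lam ^ n / n.factorial * h n‖ := by
  apply Summable.of_nonneg_of_le (fun n => norm_nonneg _)
    (fun n => ?_) (Real.summable_pow_div_factorial (2*lam))
  have h1 : ‖lam ^ n / n.factorial * h n‖ = lam ^ n / n.factorial * h n := by
    rw [Real.norm_eq_abs, abs_of_nonneg]
    exact mul_nonneg (by positivity) (h_nonneg n)
  rw [h1]
  have h2 : h n ≤ 2 ^ n := (h_le n).trans (by exact_mod_cast Nat.cast_le.mpr (Nat.lt_two_pow_self (n := n)).le)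
  calc lam ^ n / n.factorial * h n ≤ lam ^ n / n.factorial * 2 ^ n := by
        apply mul_le_mul_of_nonneg_left h2 (by positivity)
  _ = (2*lam) ^ n / n.factorial := by rw [mul_pow]; ring

lemma summable_a_norm_s18 (lam : ℝ) : Summable fun n : ℕ => ‖(-lam) ^ n / n.factorial‖ := by
  have := Real.summable_pow_div_factorial |lam|
  apply this.congr
  intro n
  rw [Real.norm_eq_abs, abs_div, abs_pow, abs_neg, Nat.abs_cast]

lemma exp_neg_eq (lam : ℝ) : Real.exp (-lam) = ∑' n : ℕ, (-lam) ^ n / n.factorial := by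
  rw [Real.exp_eq_exp_ℝ, NormedSpace.exp_eq_tsum_div]

lemma neg_one_pow_sub (N k : ℕ) (hk : k ≤ N) : (-1:ℝ)^(N-k) = (-1)^N * (-1)^k := by
  have : (-1:ℝ)^(N-k) * (-1)^k = (-1)^N := by
    rw [← pow_add, Nat.sub_add_cancel hk]
  calc (-1:ℝ)^(N-k) = (-1:ℝ)^(N-k) * ((-1)^k * (-1)^k) := by
        rw [← pow_add, ← two_mul, pow_mul]; norm_num
  _ = (-1)^N * (-1)^k := by rw [← mul_assoc, this]

lemma innerSumEval (lam : ℝ) (N : ℕ) :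
    ∑ p ∈ Finset.HasAntidiagonal.antidiagonal N, (-lam) ^ p.1 / p.1.factorial * (lam ^ p.2 / p.2.factorial * h p.2)
      = if N = 0 then 0 else (-1:ℝ)^(N-1) * lam ^ N / (N * N.factorial) := by
  rw [Finset.Nat.sum_antidiagonal_eq_sum_range_succ_mk]
  cases N with
  | zero => simp [h]
  | succ M =>
    have key : ∀ k ∈ range (M+2),
        (-lam) ^ k / k.factorial * (lam ^ ((M+1)-k) / ((M+1)-k).factorial * h ((M+1)-k))
        = lam^(M+1) / (M+1).factorial * ((-1:ℝ)^(M+1) * ((-1:ℝ)^((M+1)-k) * (((M+1).choose ((M+1)-k)):ℝ) * h ((M+1)-k))) := by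
      intro k hk
      have hkle : k ≤ M + 1 := by simpa [Nat.lt_succ_iff] using mem_range.mp hk
      have hpow : lam ^ k * lam ^ ((M+1)-k) = lam ^ (M+1) := by
        rw [← pow_add, Nat.add_sub_cancel' hkle]
      have hch : (((M+1).choose k) : ℝ) = (M+1).factorial / (k.factorial * ((M+1)-k).factorial) :=
        Nat.cast_choose ℝ hkle
      have hsym : ((M+1).choose ((M+1)-k)) = ((M+1).choose k) := Nat.choose_symm hkle
      have hsgn : (-1:ℝ)^((M+1)-k) = (-1)^(M+1) * (-1)^k := neg_one_pow_sub (M+1) k hkle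
      have hne1 : (k.factorial : ℝ) ≠ 0 := by exact_mod_cast Nat.factorial_ne_zero k
      have hne2 : (((M+1)-k).factorial : ℝ) ≠ 0 := by exact_mod_cast Nat.factorial_ne_zero _
      have hne3 : (((M+1)).factorial : ℝ) ≠ 0 := by exact_mod_cast Nat.factorial_ne_zero _
      have collapse : (-1:ℝ)^(M+1) * ((-1:ℝ)^(M+1) * (-1:ℝ)^k * (((M+1).choose k):ℝ) * h ((M+1)-k))
          = (-1:ℝ)^k * (((M+1).choose k):ℝ) * h ((M+1)-k) := by
        have hsq : (-1:ℝ)^(M+1) * (-1:ℝ)^(M+1) = 1 := by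
          rw [← pow_add, ← two_mul, pow_mul]; norm_num
        calc (-1:ℝ)^(M+1) * ((-1:ℝ)^(M+1) * (-1:ℝ)^k * (((M+1).choose k):ℝ) * h ((M+1)-k))
            = ((-1:ℝ)^(M+1) * (-1:ℝ)^(M+1)) * ((-1:ℝ)^k * (((M+1).choose k):ℝ) * h ((M+1)-k)) := by ring
        _ = (-1:ℝ)^k * (((M+1).choose k):ℝ) * h ((M+1)-k) := by rw [hsq]; ring
      rw [hsym, neg_pow, hsgn, collapse, hch, ← hpow]
      field_simp
    rw [sum_congr rfl key, ← Finset.mul_sum]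
    -- reflect the sum
    have refl : ∑ k ∈ range (M+2), ((-1:ℝ)^(M+1) * ((-1:ℝ)^((M+1)-k) * (((M+1).choose ((M+1)-k)):ℝ) * h ((M+1)-k)))
        = ∑ n ∈ range (M+2), ((-1:ℝ)^(M+1) * ((-1:ℝ)^n * (((M+1).choose n):ℝ) * h n)) := by
      rw [← Finset.sum_range_reflect (fun n => ((-1:ℝ)^(M+1) * ((-1:ℝ)^n * (((M+1).choose n):ℝ) * h n))) (M+2)]
      apply sum_congr rfl
      intro k hk
      have : M + 2 - 1 - k = (M+1) - k := by omega
      rw [this]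
    rw [refl, ← Finset.mul_sum, L3 M]
    have : (M+1:ℕ) ≠ 0 := Nat.succ_ne_zero M
    simp only [Nat.succ_ne_zero, if_false]
    have hM1 : ((M:ℝ)+1) ≠ 0 := by positivity
    have : (-1:ℝ)^(M+1) * (-1/(M+1)) = (-1:ℝ)^(M+1-1) / (M+1) := by
      rw [Nat.add_sub_cancel]
      rw [pow_succ]
      field_simp
    rw [this]
    push_cast
    field_simp

theorem part1 (lam : ℝ) (hlam : 0 < lam) :
    Real.exp (-lam) * (∑' n : ℕ, lam ^ n / n.factorial * h n) = Ein lam := by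
  rw [exp_neg_eq]
  rw [tsum_mul_tsum_eq_tsum_sum_antidiagonal_of_summable_norm (summable_a_norm_s18 lam) (summable_b_norm lam hlam)]
  have hsum : Summable fun N => ∑ p ∈ Finset.HasAntidiagonal.antidiagonal N, (-lam) ^ p.1 / p.1.factorial * (lam ^ p.2 / p.2.factorial * h p.2) :=
    (summable_norm_sum_mul_antidiagonal_of_summable_norm (summable_a_norm_s18 lam) (summable_b_norm lam hlam)).of_norm
  rw [hsum.tsum_eq_zero_add]
  rw [innerSumEval lam 0]
  simp only [if_true, zero_add]
  unfold Ein
  apply tsum_congr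
  intro n
  rw [innerSumEval lam (n+1)]
  simp only [Nat.succ_ne_zero, if_false, Nat.add_sub_cancel]
  push_cast
  ring

end Comb
section Anal
open MeasureTheory Set Filter Topology intervalIntegral

lemma gamma_int : ∫ t in Set.Ioi (0:ℝ), Real.log t * Real.exp (-t)
    = -Real.eulerMascheroniConstant := by
  -- complex derivative of GammaIntegral at 1
  have h0 : HasDerivAt Complex.GammaIntegral
      (∫ t : ℝ in Set.Ioi 0, (t:ℂ) ^ ((1:ℂ) - 1) * (Real.log t * Real.exp (-t))) 1 :=
    Complex.hasDerivAt_GammaIntegral (by norm_num)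
  have heq : (∫ t : ℝ in Set.Ioi 0, (t:ℂ) ^ ((1:ℂ) - 1) * (Real.log t * Real.exp (-t)))
      = ((∫ t : ℝ in Set.Ioi 0, Real.log t * Real.exp (-t) : ℝ) : ℂ) := by
    calc (∫ t : ℝ in Set.Ioi 0, (t:ℂ) ^ ((1:ℂ) - 1) * (Real.log t * Real.exp (-t)))
        = ∫ t : ℝ in Set.Ioi 0, ((Real.log t * Real.exp (-t) : ℝ) : ℂ) := by
          apply MeasureTheory.integral_congr_ae
          filter_upwards with t
          simp [Complex.cpow_zero]
    _ = ((∫ t : ℝ in Set.Ioi 0, Real.log t * Real.exp (-t) : ℝ) : ℂ) := integral_ofReal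
  rw [heq] at h0
  -- GammaIntegral agrees with Gamma near 1
  have hev : Complex.GammaIntegral =ᶠ[𝓝 (1:ℂ)] Complex.Gamma := by
    have hopen : IsOpen {z : ℂ | 0 < z.re} := isOpen_lt continuous_const Complex.continuous_re
    filter_upwards [hopen.mem_nhds (by norm_num : (0:ℝ) < (1:ℂ).re)] with z hz
    exact (Complex.Gamma_eq_integral hz).symm
  have h1 : HasDerivAt Complex.Gamma
      ((∫ t : ℝ in Set.Ioi 0, Real.log t * Real.exp (-t) : ℝ) : ℂ) 1 :=
    h0.congr_of_eventuallyEq hev.symm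
  -- restrict to ℝ
  have h2 := h1.real_of_complex
  have h3 : HasDerivAt Real.Gamma (-Real.eulerMascheroniConstant) 1 := Real.hasDerivAt_Gamma_one
  have h4 : HasDerivAt Real.Gamma
      (((∫ t : ℝ in Set.Ioi 0, Real.log t * Real.exp (-t) : ℝ) : ℂ)).re 1 := h2
  have := h4.unique h3
  simpa using this

lemma intOn_neg_log : IntegrableOn (fun t => -Real.log t) (Ioc (0:ℝ) 1) := by
  have hcont : ContinuousOn (fun t : ℝ => t + Real.negMulLog t) (Icc 0 1) :=
    (continuous_id.add Real.continuous_negMulLog).continuousOn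
  have hderiv : ∀ x ∈ Ioo (0:ℝ) 1, HasDerivAt (fun t : ℝ => t + Real.negMulLog t) (-Real.log x) x := by
    intro x hx
    have hx0 : x ≠ 0 := ne_of_gt hx.1
    have h1 : HasDerivAt (fun t : ℝ => t * Real.log t) (Real.log x + 1) x :=
      Real.hasDerivAt_mul_log hx0
    have h2 : HasDerivAt (fun t : ℝ => t + Real.negMulLog t) (1 + -(Real.log x + 1)) x := by
      refine (hasDerivAt_id x).add ?_
      simpa [Real.negMulLog_eq_neg, Pi.neg_def] using h1.neg
    exact h2.congr_deriv (by ring)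
  have hpos : ∀ x ∈ Ioo (0:ℝ) 1, 0 ≤ -Real.log x := by
    intro x hx
    simpa using Real.log_nonpos hx.1.le hx.2.le
  exact integrableOn_deriv_of_nonneg hcont hderiv hpos

lemma intOn_explog01 : IntegrableOn (fun t => Real.log t * Real.exp (-t)) (Ioc (0:ℝ) 1) := by
  apply Integrable.mono' intOn_neg_log
  · exact ((Real.measurable_log.mul
      (Real.measurable_exp.comp measurable_neg)).aestronglyMeasurable).restrict
  · filter_upwards [ae_restrict_mem measurableSet_Ioc] with t ht
    have h1 : Real.exp (-t) ≤ 1 := Real.exp_le_one_iff.mpr (by linarith [ht.1])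
    have h2 : Real.log t ≤ 0 := Real.log_nonpos ht.1.le ht.2
    rw [Real.norm_eq_abs, abs_mul, abs_of_nonpos h2]
    have habs : |Real.exp (-t)| ≤ 1 := by
      rw [abs_of_pos (Real.exp_pos _)]; exact h1
    calc -Real.log t * |Real.exp (-t)| ≤ -Real.log t * 1 :=
          mul_le_mul_of_nonneg_left habs (by linarith)
    _ = -Real.log t := by ring

lemma intOn_expdiv (c : ℝ) (hc : 0 < c) : IntegrableOn (fun t => Real.exp (-t) / t) (Ioi c) := by
  have hbase : IntegrableOn (fun t : ℝ => Real.exp (-1 * t)) (Ioi c) :=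
    exp_neg_integrableOn_Ioi c one_pos
  apply Integrable.mono' (hbase.const_mul (1/c))
  · exact ((Real.measurable_exp.comp measurable_neg).div measurable_id).aestronglyMeasurable.restrict
  · filter_upwards [ae_restrict_mem measurableSet_Ioi] with t ht
    have ht0 : 0 < t := hc.trans ht
    rw [Real.norm_eq_abs, abs_div, abs_of_pos (Real.exp_pos _), abs_of_pos ht0]
    rw [div_le_iff₀ ht0]
    have : Real.exp (-1 * t) = Real.exp (-t) := by norm_num
    rw [this]
    calc Real.exp (-t) = Real.exp (-t) * (1/c * c) := by field_simp
    _ ≤ 1/c * Real.exp (-t) * t := by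
        rw [mul_comm]
        have := mul_le_mul_of_nonneg_left ht.le (by positivity : (0:ℝ) ≤ 1/c * Real.exp (-t))
        calc (1/c * c) * Real.exp (-t) = (1/c * Real.exp (-t)) * c := by ring
        _ ≤ (1/c * Real.exp (-t)) * t := mul_le_mul_of_nonneg_left ht.le (by positivity)
        _ = 1/c * Real.exp (-t) * t := by ring

lemma intOn_explogIoi1 : IntegrableOn (fun t => Real.log t * Real.exp (-t)) (Ioi (1:ℝ)) := by
  have hbase : IntegrableOn (fun x : ℝ => Real.exp (-x) * x ^ ((2:ℝ) - 1)) (Ioi 0) :=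
    Real.GammaIntegral_convergent (by norm_num)
  apply Integrable.mono' (hbase.mono_set (Ioi_subset_Ioi zero_le_one))
  · exact ((Real.measurable_log.mul
      (Real.measurable_exp.comp measurable_neg)).aestronglyMeasurable).restrict
  · filter_upwards [ae_restrict_mem measurableSet_Ioi] with t ht
    have ht1 : (1:ℝ) < t := ht
    have ht0 : 0 < t := zero_lt_one.trans ht1
    have hlog : |Real.log t| ≤ t := by
      rw [abs_of_nonneg (Real.log_nonneg ht1.le)]
      linarith [Real.log_le_sub_one_of_pos ht0]
    rw [Real.norm_eq_abs, abs_mul, abs_of_pos (Real.exp_pos _)]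
    calc |Real.log t| * Real.exp (-t) ≤ t * Real.exp (-t) :=
          mul_le_mul_of_nonneg_right hlog (Real.exp_pos _).le
    _ = Real.exp (-t) * t ^ ((2:ℝ) - 1) := by
        rw [show (2:ℝ) - 1 = 1 by norm_num, Real.rpow_one]; ring

lemma intOn_onesub (c : ℝ) (hc : 0 < c) :
    IntegrableOn (fun t => (1 - Real.exp (-t)) / t) (Ioc (0:ℝ) c) := by
  have : IntegrableOn (fun _ : ℝ => (1:ℝ)) (Ioc (0:ℝ) c) := (integrableOn_const_iff (C := (1:ℝ))).mpr
    (Or.inr (by simp [hc]))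
  apply Integrable.mono' this
  · exact (((measurable_const.sub (Real.measurable_exp.comp measurable_neg)).div
      measurable_id)).aestronglyMeasurable.restrict
  · filter_upwards [ae_restrict_mem measurableSet_Ioc] with t ht
    have ht0 : 0 < t := ht.1
    have h1 : Real.exp (-t) ≤ 1 := Real.exp_le_one_iff.mpr (by linarith)
    have h2 : 1 - t ≤ Real.exp (-t) := by
      have := Real.add_one_le_exp (-t); linarith
    rw [Real.norm_eq_abs, abs_div, abs_of_pos ht0, abs_of_nonneg (by linarith : (0:ℝ) ≤ 1 - Real.exp (-t))]
    rw [div_le_one ht0]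
    linarith

-- derivative of 1 - exp (-t)
lemma hasDerivAt_one_sub_exp_neg (t : ℝ) :
    HasDerivAt (fun s : ℝ => 1 - Real.exp (-s)) (Real.exp (-t)) t := by
  have h1 : HasDerivAt (fun s : ℝ => Real.exp (-s)) (-Real.exp (-t)) t := by
    simpa [Function.comp_def] using (Real.hasDerivAt_exp (-t)).comp t (hasDerivAt_neg t)
  simpa using (h1.const_sub 1)

-- interval integrability of continuous-on-positive functions
lemma ii_of_pos {f : ℝ → ℝ} (hf : ContinuousOn f (Ioi (0:ℝ))) {a b : ℝ}
    (ha : 0 < a) (hb : 0 < b) : IntervalIntegrable f volume a b := by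
  apply ContinuousOn.intervalIntegrable
  apply hf.mono
  intro x hx
  rcases le_total a b with hab | hab
  · rw [uIcc_of_le hab] at hx; exact lt_of_lt_of_le ha hx.1
  · rw [uIcc_of_ge hab] at hx; exact lt_of_lt_of_le hb hx.1

lemma contOn_expdiv : ContinuousOn (fun t => Real.exp (-t) / t) (Ioi (0:ℝ)) := by
  apply ContinuousOn.div
  · exact (Real.continuous_exp.comp continuous_neg).continuousOn
  · exact continuousOn_id
  · intro x hx; exact ne_of_gt hx

lemma contOn_onesub : ContinuousOn (fun t => (1 - Real.exp (-t)) / t) (Ioi (0:ℝ)) := by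
  apply ContinuousOn.div
  · exact (continuous_const.sub (Real.continuous_exp.comp continuous_neg)).continuousOn
  · exact continuousOn_id
  · intro x hx; exact ne_of_gt hx

lemma parts_eps {ε : ℝ} (hε : 0 < ε) (hε1 : ε ≤ 1) :
    ∫ t in ε..1, Real.log t * Real.exp (-t)
      = -(Real.log ε * (1 - Real.exp (-ε))) - ∫ t in ε..1, t⁻¹ * (1 - Real.exp (-t)) := by
  have hu : ∀ x ∈ uIcc ε 1, HasDerivAt Real.log x⁻¹ x := by
    intro x hx
    rw [uIcc_of_le hε1] at hx
    exact Real.hasDerivAt_log (ne_of_gt (lt_of_lt_of_le hε hx.1))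
  have hv : ∀ x ∈ uIcc ε 1, HasDerivAt (fun s : ℝ => 1 - Real.exp (-s)) (Real.exp (-x)) x :=
    fun x _ => hasDerivAt_one_sub_exp_neg x
  have hu' : IntervalIntegrable (fun x : ℝ => x⁻¹) volume ε 1 :=
    ii_of_pos (continuousOn_inv₀.mono (fun x hx => ne_of_gt hx)) hε one_pos
  have hv' : IntervalIntegrable (fun t : ℝ => Real.exp (-t)) volume ε 1 :=
    (Real.continuous_exp.comp continuous_neg).intervalIntegrable ε 1
  have := integral_mul_deriv_eq_deriv_mul hu hv hu' hv'
  rw [this]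
  simp [Real.log_one]

lemma parts01 : ∫ t in Ioc (0:ℝ) 1, Real.log t * Real.exp (-t)
    = -∫ t in Ioc (0:ℝ) 1, (1 - Real.exp (-t)) / t := by
  set l : Filter ℝ := 𝓝[Ioc (0:ℝ) 1] 0 with hl
  have hlne : l.NeBot := by
    apply mem_closure_iff_nhdsWithin_neBot.mp
    rw [closure_Ioc (one_ne_zero).symm]
    exact ⟨le_refl 0, zero_le_one⟩
  have hmono : l ≤ 𝓝[Icc (0:ℝ) 1] 0 := nhdsWithin_mono 0 Ioc_subset_Icc_self
  have hmono' : l ≤ 𝓝[>] (0:ℝ) := nhdsWithin_mono 0 Ioc_subset_Ioi_self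
  -- generic limit of primitives
  have key : ∀ f : ℝ → ℝ, IntegrableOn f (Ioc (0:ℝ) 1) →
      Tendsto (fun ε => ∫ t in ε..1, f t) l (𝓝 (∫ t in Ioc (0:ℝ) 1, f t)) := by
    intro f hf
    have hint : IntervalIntegrable f volume (min 1 0) (max 1 1) := by
      simp only [min_comm (1:ℝ) 0, min_eq_left zero_le_one, max_self]
      rw [intervalIntegrable_iff_integrableOn_Ioc_of_le zero_le_one]
      exact hf
    have hcw := intervalIntegral.continuousWithinAt_primitive (f := f)
      (a := 1) (b₁ := 0) (b₂ := 1) (b₀ := 0) (measure_singleton 0) hint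
    have h1 : Tendsto (fun b => ∫ x in (1:ℝ)..b, f x) l
        (𝓝 (∫ x in (1:ℝ)..(0:ℝ), f x)) := hcw.tendsto.mono_left hmono
    have h2 := h1.neg
    have h3 : (fun b => -∫ x in (1:ℝ)..b, f x) = fun b => ∫ x in b..(1:ℝ), f x := by
      funext b; rw [intervalIntegral.integral_symm, neg_neg]
    rw [h3] at h2
    have h4 : -∫ x in (1:ℝ)..(0:ℝ), f x = ∫ t in Ioc (0:ℝ) 1, f t := by
      rw [intervalIntegral.integral_symm, neg_neg, intervalIntegral.integral_of_le zero_le_one]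
    rwa [h4] at h2
  have hF := key _ intOn_explog01
  have hG' : IntegrableOn (fun t => t⁻¹ * (1 - Real.exp (-t))) (Ioc (0:ℝ) 1) := by
    apply (intOn_onesub 1 one_pos).congr_fun _ measurableSet_Ioc
    intro t ht; simp [div_eq_inv_mul]
  have hG := key _ hG'
  have hlog : Tendsto (fun ε => -(Real.log ε * (1 - Real.exp (-ε)))) l (𝓝 0) := by
    have hbase : Tendsto (fun x : ℝ => Real.log x * x ^ (1:ℝ)) (𝓝[>] (0:ℝ)) (𝓝 0) :=
      tendsto_log_mul_rpow_nhdsGT_zero one_pos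
    have hbase' : Tendsto (fun x : ℝ => |Real.log x * x ^ (1:ℝ)|) l (𝓝 0) := by
      have := (hbase.mono_left hmono').abs
      simpa using this
    apply squeeze_zero_norm' _ hbase'
    filter_upwards [self_mem_nhdsWithin] with ε hε
    have hε0 : 0 < ε := hε.1
    have h1 : 0 ≤ 1 - Real.exp (-ε) := by
      have := Real.exp_le_one_iff.mpr (by linarith : -ε ≤ 0); linarith
    have h2 : 1 - Real.exp (-ε) ≤ ε := by
      have := Real.add_one_le_exp (-ε); linarith
    rw [Real.norm_eq_abs, abs_neg, abs_mul, Real.rpow_one, abs_mul]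
    apply mul_le_mul_of_nonneg_left _ (abs_nonneg _)
    rw [abs_of_nonneg h1, abs_of_pos hε0]
    exact h2
  have hcomb := hlog.sub hG
  rw [zero_sub] at hcomb
  have hevent : (fun ε => -(Real.log ε * (1 - Real.exp (-ε))) - ∫ t in ε..1, t⁻¹ * (1 - Real.exp (-t)))
      =ᶠ[l] (fun ε => ∫ t in ε..1, Real.log t * Real.exp (-t)) := by
    filter_upwards [self_mem_nhdsWithin] with ε hε
    exact (parts_eps hε.1 hε.2).symm
  have hF2 := Filter.Tendsto.congr' hevent hcomb
  have := tendsto_nhds_unique hF hF2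
  rw [this]
  congr 1
  apply setIntegral_congr_fun measurableSet_Ioc
  intro t ht
  simp [div_eq_inv_mul]

lemma parts_b {b : ℝ} (hb : 1 ≤ b) :
    ∫ t in (1:ℝ)..b, Real.log t * Real.exp (-t)
      = -(Real.log b * Real.exp (-b)) + ∫ t in (1:ℝ)..b, Real.exp (-t) / t := by
  have hu : ∀ x ∈ uIcc (1:ℝ) b, HasDerivAt Real.log x⁻¹ x := by
    intro x hx
    rw [uIcc_of_le hb] at hx
    exact Real.hasDerivAt_log (ne_of_gt (lt_of_lt_of_le one_pos hx.1))
  have hv : ∀ x ∈ uIcc (1:ℝ) b, HasDerivAt (fun s : ℝ => -Real.exp (-s)) (Real.exp (-x)) x := by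
    intro x _
    have h1 : HasDerivAt (fun s : ℝ => Real.exp (-s)) (-Real.exp (-x)) x := by
      simpa [Function.comp_def] using (Real.hasDerivAt_exp (-x)).comp x (hasDerivAt_neg x)
    simpa [Pi.neg_def] using h1.neg
  have hu' : IntervalIntegrable (fun x : ℝ => x⁻¹) volume 1 b :=
    ii_of_pos (continuousOn_inv₀.mono (fun x hx => ne_of_gt hx)) one_pos (lt_of_lt_of_le one_pos hb)
  have hv' : IntervalIntegrable (fun t : ℝ => Real.exp (-t)) volume 1 b :=
    (Real.continuous_exp.comp continuous_neg).intervalIntegrable 1 b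
  have h := integral_mul_deriv_eq_deriv_mul hu hv hu' hv'
  rw [h]
  rw [show (∫ x in (1:ℝ)..b, x⁻¹ * -Real.exp (-x)) = -∫ x in (1:ℝ)..b, Real.exp (-x) / x from by
    rw [← intervalIntegral.integral_neg]
    apply intervalIntegral.integral_congr
    intro x _; field_simp]
  simp [Real.log_one]
  try ring

lemma parts1i : ∫ t in Ioi (1:ℝ), Real.log t * Real.exp (-t)
    = ∫ t in Ioi (1:ℝ), Real.exp (-t) / t := by
  have hF : Tendsto (fun b => ∫ t in (1:ℝ)..b, Real.log t * Real.exp (-t)) atTop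
      (𝓝 (∫ t in Ioi (1:ℝ), Real.log t * Real.exp (-t))) :=
    intervalIntegral_tendsto_integral_Ioi 1 intOn_explogIoi1 tendsto_id
  have hG : Tendsto (fun b => ∫ t in (1:ℝ)..b, Real.exp (-t) / t) atTop
      (𝓝 (∫ t in Ioi (1:ℝ), Real.exp (-t) / t)) :=
    intervalIntegral_tendsto_integral_Ioi 1 (intOn_expdiv 1 one_pos) tendsto_id
  have hlog : Tendsto (fun b : ℝ => -(Real.log b * Real.exp (-b))) atTop (𝓝 0) := by
    have hbase : Tendsto (fun x : ℝ => x ^ (1:ℕ) * Real.exp (-x)) atTop (𝓝 0) :=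
      Real.tendsto_pow_mul_exp_neg_atTop_nhds_zero 1
    apply squeeze_zero_norm' _ (by simpa using hbase.abs)
    filter_upwards [eventually_ge_atTop (1:ℝ)] with b hb
    have hb0 : 0 < b := lt_of_lt_of_le one_pos hb
    rw [Real.norm_eq_abs, abs_neg, abs_mul, abs_of_pos (Real.exp_pos (-b))]
    apply mul_le_mul_of_nonneg_right _ (Real.exp_pos _).le
    rw [abs_of_nonneg (Real.log_nonneg hb), abs_of_pos hb0]
    linarith [Real.log_le_sub_one_of_pos hb0]
  have hcomb := hlog.add hG
  rw [zero_add] at hcomb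
  have hevent : (fun b => -(Real.log b * Real.exp (-b)) + ∫ t in (1:ℝ)..b, Real.exp (-t) / t)
      =ᶠ[atTop] (fun b => ∫ t in (1:ℝ)..b, Real.log t * Real.exp (-t)) := by
    filter_upwards [eventually_ge_atTop (1:ℝ)] with b hb
    exact (parts_b hb).symm
  exact tendsto_nhds_unique hF (Filter.Tendsto.congr' hevent hcomb)

lemma exp_tsum (y : ℝ) : Real.exp y = ∑' n : ℕ, y ^ n / n.factorial := by
  rw [Real.exp_eq_exp_ℝ, NormedSpace.exp_eq_tsum_div]

lemma fact_le_succ_fact (n : ℕ) : (n.factorial : ℝ) ≤ ((n+1).factorial : ℝ) := by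
  exact_mod_cast Nat.factorial_le (Nat.le_succ n)

lemma summable_series (t : ℝ) : Summable (fun n : ℕ => (-1:ℝ)^n * t^n / ((n+1).factorial : ℝ)) := by
  apply Summable.of_norm
  apply Summable.of_nonneg_of_le (fun n => norm_nonneg _) (fun n => ?_)
    (Real.summable_pow_div_factorial |t|)
  rw [Real.norm_eq_abs, abs_div, abs_mul, abs_pow, abs_neg, abs_one, one_pow, one_mul, abs_pow,
    Nat.abs_cast]
  apply div_le_div_of_nonneg_left (by positivity) (by exact_mod_cast Nat.factorial_pos n)
    (fact_le_succ_fact n)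

lemma series_eq (t : ℝ) (ht : 0 < t) :
    ∑' n : ℕ, (-1:ℝ)^n * t^n / ((n+1).factorial : ℝ) = (1 - Real.exp (-t)) / t := by
  have hsum : Summable (fun n : ℕ => (-t:ℝ) ^ n / n.factorial) :=
    Real.summable_pow_div_factorial (-t)
  have h1 : ∑' n : ℕ, (-t:ℝ)^(n+1)/((n+1).factorial : ℝ) = Real.exp (-t) - 1 := by
    have h0 := exp_tsum (-t)
    rw [hsum.tsum_eq_zero_add] at h0
    simp only [pow_zero, Nat.factorial_zero, Nat.cast_one, div_one] at h0
    linarith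
  rw [eq_div_iff (ne_of_gt ht), ← tsum_mul_right]
  have hterm : ∀ n : ℕ, (-1:ℝ)^n * t^n / ((n+1).factorial : ℝ) * t
      = -((-t)^(n+1)/((n+1).factorial : ℝ)) := by
    intro n
    rw [neg_pow, pow_succ]
    ring
  rw [tsum_congr hterm, tsum_neg, h1]
  ring

lemma EinInt (x : ℝ) (hx : 0 < x) :
    Ein x = ∫ t in Ioc (0:ℝ) x, (1 - Real.exp (-t)) / t := by
  have hne : ∫ t in Ioc (0:ℝ) x, (1 - Real.exp (-t)) / t
      = ∫ t in Ioc (0:ℝ) x, ∑' n : ℕ, (-1:ℝ)^n * t^n / ((n+1).factorial : ℝ) := by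
    apply setIntegral_congr_fun measurableSet_Ioc
    intro t ht
    exact (series_eq t ht.1).symm
  have hmeas : ∀ n : ℕ, AEStronglyMeasurable
      (fun t : ℝ => (-1:ℝ)^n * t^n / ((n+1).factorial : ℝ))
      (volume.restrict (Ioc (0:ℝ) x)) :=
    fun n => ((continuous_const.mul (continuous_pow n)).div_const _).aestronglyMeasurable.restrict
  have hbound : ∀ n : ℕ, (∫⁻ t in Ioc (0:ℝ) x, ‖(-1:ℝ)^n * t^n / ((n+1).factorial : ℝ)‖₊)
      ≤ ENNReal.ofReal (x^n / ((n+1).factorial : ℝ) * x) := by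
    intro n
    have hb : ∀ᵐ t ∂(volume.restrict (Ioc (0:ℝ) x)),
        ((‖(-1:ℝ)^n * t^n / ((n+1).factorial : ℝ)‖₊ : ENNReal))
          ≤ ENNReal.ofReal (x^n / ((n+1).factorial : ℝ)) := by
      filter_upwards [ae_restrict_mem measurableSet_Ioc] with t ht
      rw [show ((‖(-1:ℝ)^n * t^n / ((n+1).factorial : ℝ)‖₊ : ENNReal)) = ENNReal.ofReal ‖(-1:ℝ)^n * t^n / ((n+1).factorial : ℝ)‖ from (ofReal_norm _).symm]
      apply ENNReal.ofReal_le_ofReal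
      rw [Real.norm_eq_abs, abs_div, abs_mul, abs_pow, abs_neg, abs_one, one_pow, one_mul,
        abs_pow, Nat.abs_cast, abs_of_pos ht.1]
      have hpow : t^n ≤ x^n := pow_le_pow_left₀ ht.1.le ht.2 n
      have hfp : (0:ℝ) < ((n+1).factorial : ℝ) := by exact_mod_cast Nat.factorial_pos (n+1)
      exact (div_le_div_iff_of_pos_right hfp).mpr hpow
    calc (∫⁻ t in Ioc (0:ℝ) x, ‖(-1:ℝ)^n * t^n / ((n+1).factorial : ℝ)‖₊)
        ≤ ∫⁻ _ in Ioc (0:ℝ) x, ENNReal.ofReal (x^n / ((n+1).factorial : ℝ)) :=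
          lintegral_mono_ae hb
    _ = ENNReal.ofReal (x^n / ((n+1).factorial : ℝ)) * volume (Ioc (0:ℝ) x) := by
          rw [setLIntegral_const]
    _ = ENNReal.ofReal (x^n / ((n+1).factorial : ℝ)) * ENNReal.ofReal x := by
          rw [Real.volume_Ioc, sub_zero]
    _ = ENNReal.ofReal (x^n / ((n+1).factorial : ℝ) * x) := by
          rw [← ENNReal.ofReal_mul (by positivity)]
  have hsummable : Summable (fun n : ℕ => x^n / ((n+1).factorial : ℝ) * x) := by
    apply Summable.mul_right
    apply Summable.of_nonneg_of_le (fun n => by positivity) (fun n => ?_)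
      (Real.summable_pow_div_factorial x)
    exact div_le_div_of_nonneg_left (by positivity) (by exact_mod_cast Nat.factorial_pos n)
      (fact_le_succ_fact n)
  have hlint : (∑' n : ℕ, ∫⁻ t in Ioc (0:ℝ) x, ‖(-1:ℝ)^n * t^n / ((n+1).factorial : ℝ)‖₊) ≠ ⊤ := by
    apply ne_top_of_le_ne_top _ (ENNReal.tsum_le_tsum hbound)
    rw [← ENNReal.ofReal_tsum_of_nonneg (fun n => by positivity) hsummable]
    exact ENNReal.ofReal_ne_top
  rw [hne, integral_tsum hmeas hlint]
  unfold Ein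
  apply tsum_congr
  intro n
  have hfact : (((n+1).factorial : ℕ) : ℝ) ≠ 0 := by
    exact_mod_cast Nat.factorial_ne_zero (n+1)
  have htop : ∫ t in Ioc (0:ℝ) x, (-1:ℝ)^n * t^n / ((n+1).factorial : ℝ)
      = ∫ t in (0:ℝ)..x, ((-1:ℝ)^n / ((n+1).factorial : ℝ)) * t^n := by
    rw [intervalIntegral.integral_of_le hx.le]
    apply setIntegral_congr_fun measurableSet_Ioc
    intro t _
    ring
  rw [htop, intervalIntegral.integral_const_mul, integral_pow]
  push_cast
  field_simp
  ring

theorem part2 (lam : ℝ) (hlam : 0 < lam) :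
    Ein lam = Real.log lam + Real.eulerMascheroniConstant
      + ∫ t in Set.Ioi lam, Real.exp (-t) / t := by
  -- B2 : gamma as combination of integrals
  have hsplit : ∫ t in Ioi (0:ℝ), Real.log t * Real.exp (-t)
      = (∫ t in Ioc (0:ℝ) 1, Real.log t * Real.exp (-t))
        + ∫ t in Ioi (1:ℝ), Real.log t * Real.exp (-t) := by
    rw [← setIntegral_union (Set.Ioc_disjoint_Ioi le_rfl) measurableSet_Ioi
      intOn_explog01 intOn_explogIoi1, Ioc_union_Ioi_eq_Ioi zero_le_one]
  have B2 : Real.eulerMascheroniConstant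
      = (∫ t in Ioc (0:ℝ) 1, (1 - Real.exp (-t)) / t) - ∫ t in Ioi (1:ℝ), Real.exp (-t) / t := by
    have := gamma_int
    rw [hsplit, parts01, parts1i] at this
    linarith
  -- Claim 1 : splitting the Ioi lam integral
  have claim1 : ∫ t in Ioi lam, Real.exp (-t) / t
      = (∫ t in lam..1, Real.exp (-t) / t) + ∫ t in Ioi (1:ℝ), Real.exp (-t) / t := by
    rcases le_total lam 1 with hl | hl
    · rw [← Ioc_union_Ioi_eq_Ioi hl,
        setIntegral_union (Set.Ioc_disjoint_Ioi le_rfl) measurableSet_Ioi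
          ((intOn_expdiv lam hlam).mono_set Ioc_subset_Ioi_self) (intOn_expdiv 1 one_pos),
        intervalIntegral.integral_of_le hl]
    · have h2 : ∫ t in Ioi (1:ℝ), Real.exp (-t) / t
          = (∫ t in Ioc (1:ℝ) lam, Real.exp (-t) / t) + ∫ t in Ioi lam, Real.exp (-t) / t := by
        rw [← setIntegral_union (Set.Ioc_disjoint_Ioi le_rfl) measurableSet_Ioi
          ((intOn_expdiv 1 one_pos).mono_set Ioc_subset_Ioi_self) (intOn_expdiv lam hlam),
          Ioc_union_Ioi_eq_Ioi hl]
      rw [intervalIntegral.integral_symm, intervalIntegral.integral_of_le hl]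
      linarith
  -- Claim 2 : log lam as interval integral
  have claim2 : (∫ t in lam..1, (1:ℝ)/t) = -Real.log lam := by
    rw [integral_one_div_of_pos hlam one_pos, one_div, Real.log_inv]
  -- interval integrability
  have iig : IntervalIntegrable (fun t => Real.exp (-t) / t) volume lam 1 :=
    ii_of_pos contOn_expdiv hlam one_pos
  have iio : IntervalIntegrable (fun t : ℝ => (1:ℝ)/t) volume lam 1 := by
    apply ii_of_pos _ hlam one_pos
    apply ContinuousOn.div continuousOn_const continuousOn_id
    intro x hx; exact ne_of_gt hx
  have iif2a : IntervalIntegrable (fun t => (1 - Real.exp (-t)) / t) volume 0 1 := by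
    rw [intervalIntegrable_iff_integrableOn_Ioc_of_le zero_le_one]
    exact intOn_onesub 1 one_pos
  have iif2b : IntervalIntegrable (fun t => (1 - Real.exp (-t)) / t) volume 1 lam := by
    rw [intervalIntegrable_iff]
    apply (intOn_onesub (max 1 lam) (lt_of_lt_of_le one_pos (le_max_left _ _))).mono_set
    exact Ioc_subset_Ioc (le_min (zero_le_one) hlam.le) le_rfl
  -- log lam + ∫ lam..1 g = ∫ 1..lam f2
  have hkey : Real.log lam + (∫ t in lam..1, Real.exp (-t) / t)
      = ∫ t in (1:ℝ)..lam, (1 - Real.exp (-t)) / t := by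
    have hsub : (∫ t in lam..1, Real.exp (-t) / t) - (∫ t in lam..1, (1:ℝ)/t)
        = ∫ t in lam..1, (Real.exp (-t) / t - 1/t) := (intervalIntegral.integral_sub iig iio).symm
    have hcongr : (∫ t in lam..1, (Real.exp (-t) / t - 1/t))
        = ∫ t in lam..1, -((1 - Real.exp (-t)) / t) := by
      apply intervalIntegral.integral_congr
      intro x _
      by_cases hx0 : x = 0
      · simp [hx0]
      · field_simp
        ring
    rw [hcongr, intervalIntegral.integral_neg, ← intervalIntegral.integral_symm] at hsub
    rw [claim2] at hsub
    linarith
  -- assemble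
  rw [B2, claim1, EinInt lam hlam]
  have hEin : ∫ t in Ioc (0:ℝ) lam, (1 - Real.exp (-t)) / t
      = (∫ t in Ioc (0:ℝ) 1, (1 - Real.exp (-t)) / t)
        + ∫ t in (1:ℝ)..lam, (1 - Real.exp (-t)) / t := by
    rw [← intervalIntegral.integral_of_le zero_le_one,
      intervalIntegral.integral_add_adjacent_intervals iif2a iif2b,
      intervalIntegral.integral_of_le hlam.le]
  rw [hEin, ← hkey]
  ring

end Anal

theorem stmt18 (lam : ℝ) (hlam : 0 < lam) :
    Real.exp (-lam) * (∑' n : ℕ, lam ^ n / n.factorial * h n) = Ein lam ∧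
    Ein lam = Real.log lam + Real.eulerMascheroniConstant
      + ∫ t in Set.Ioi lam, Real.exp (-t) / t := by
  exact ⟨part1 lam hlam, part2 lam hlam⟩
end
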